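/- Let T be a bounded linear operator on a Banach space X and let x ∈ X. If 0 ∈ J_T^mix(x), then J_T^mix(x) = J_T^mix(0). -/

import Mathlib

open Filter Topology

/-- The extended mixing limit set `J_T^mix(x)`: all `y` for which there exists a
sequence `(x_n)` with `x_n → x` and `T^n x_n → y`. -/
noncomputable def Jmix {X : Type*} [SeminormedAddCommGroup X] [NormedSpace ℂ X]
    (T : X →L[ℂ] X) (x : X) : Set X :=
  {y | ∃ u : ℕ → X, Tendsto u atTop (𝓝 x) ∧ Tendsto (fun n => (T ^ n) (u n)) atTop (𝓝 y)}

/-! Since `0 ∈ J(x)` and `J(x) + J(x') ⊆ J(x + x')`, `J(x) - J(x') ⊆ J(x - x')`, subtracting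
resp. adding the witness sequence for `0 ∈ J(x)` moves between `J(x)` and `J(0)`. -/

section

variable {X : Type*} [SeminormedAddCommGroup X] [NormedSpace ℂ X] {T : X →L[ℂ] X}
  {x x' y y' : X}

theorem add_mem_Jmix (hy : y ∈ Jmix T x) (hy' : y' ∈ Jmix T x') :
    y + y' ∈ Jmix T (x + x') := by
  obtain ⟨u, hu, hTu⟩ := hy
  obtain ⟨u', hu', hTu'⟩ := hy'
  exact ⟨u + u', hu.add hu', by simpa only [Pi.add_apply, map_add] using hTu.add hTu'⟩

theorem sub_mem_Jmix (hy : y ∈ Jmix T x) (hy' : y' ∈ Jmix T x') :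
    y - y' ∈ Jmix T (x - x') := by
  obtain ⟨u, hu, hTu⟩ := hy
  obtain ⟨u', hu', hTu'⟩ := hy'
  exact ⟨u - u', hu.sub hu', by simpa only [Pi.sub_apply, map_sub] using hTu.sub hTu'⟩

end

theorem stmt8_general {X : Type*} [NormedAddCommGroup X] [NormedSpace ℂ X]
    (T : X →L[ℂ] X) (x : X) (h : (0 : X) ∈ Jmix T x) :
    Jmix T x = Jmix T 0 := by
  ext y
  constructor
  · intro hy
    simpa only [sub_zero, sub_self] using sub_mem_Jmix hy h
  · intro hy
    simpa only [add_zero, zero_add] using add_mem_Jmix hy h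

/-- If `0 ∈ J_T^mix(x)`, then `J_T^mix(x) = J_T^mix(0)`. -/
theorem stmt8 {X : Type*} [NormedAddCommGroup X] [NormedSpace ℂ X] [CompleteSpace X]
    (T : X →L[ℂ] X) (x : X) (h : (0 : X) ∈ Jmix T x) :
    Jmix T x = Jmix T 0 :=
  stmt8_general T x h
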